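/- arXiv:1211.3689 — 3 statements merged into one kernel-verified Lean document; each statement's English description precedes it below -/
import Mathlib

section
/- For every finite simple graph G and every natural number k ≥ 1: φ^(k)(G) ≤ φ^(k+1)(G), φ^(k)(G) ≤ φ(G), and φ(G) ≤ ω(G) ≤ χ(G), where ω(G) is the clique number and χ(G) the chromatic number of G. -/
open Finset

/-- `W` is a *small set* in `G`: every vertex in `W` has degree at most `n - |W|`. -/
def SimpleGraph.IsSmallSet {V : Type*} [Fintype V] (G : SimpleGraph V)
    [DecidableRel G.Adj] (W : Finset V) : Prop :=
  ∀ v ∈ W, G.degree v ≤ Fintype.card V - W.card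

/-- `W` is a *δₖ-small set* in `G`: `∑_{v ∈ W} d(v)^k ≤ |W| (n - |W|)^k`. -/
def SimpleGraph.IsDeltaSmallSet {V : Type*} [Fintype V] (G : SimpleGraph V)
    [DecidableRel G.Adj] (k : ℕ) (W : Finset V) : Prop :=
  ∑ v ∈ W, (G.degree v) ^ k ≤ W.card * (Fintype.card V - W.card) ^ k

/-- `φ(G)`: least `r` such that `V(G)` decomposes into `r` small sets. -/
noncomputable def SimpleGraph.phi {V : Type*} [Fintype V] (G : SimpleGraph V)
    [DecidableRel G.Adj] : ℕ :=
  sInf {r | ∃ f : V → Fin r, ∀ i, G.IsSmallSet (Finset.univ.filter fun v => f v = i)}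

/-- `φ⁽ᵏ⁾(G)`: least `r` such that `V(G)` decomposes into `r` δₖ-small sets. -/
noncomputable def SimpleGraph.phiDelta {V : Type*} [Fintype V] (G : SimpleGraph V)
    [DecidableRel G.Adj] (k : ℕ) : ℕ :=
  sInf {r | ∃ f : V → Fin r, ∀ i, G.IsDeltaSmallSet k (Finset.univ.filter fun v => f v = i)}

/-- `D_k(G)`: the `k`-th power mean of the degrees of `G`. -/
noncomputable def SimpleGraph.degPowerMean {V : Type*} [Fintype V] (G : SimpleGraph V)
    [DecidableRel G.Adj] (k : ℕ) : ℝ :=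
  ((∑ v, (G.degree v : ℝ) ^ k) / (Fintype.card V : ℝ)) ^ ((1 : ℝ) / k)

/-- `α⁽ᵏ⁾(G)`: the maximum size of a δₖ-small set of `G`. -/
noncomputable def SimpleGraph.alphaDelta {V : Type*} [Fintype V] (G : SimpleGraph V)
    [DecidableRel G.Adj] (k : ℕ) : ℕ :=
  sSup {m | ∃ W : Finset V, G.IsDeltaSmallSet k W ∧ W.card = m}

/-- `S(G)`: the maximum size of a small set of `G`. -/
noncomputable def SimpleGraph.maxSmallSetSize {V : Type*} [Fintype V] (G : SimpleGraph V)
    [DecidableRel G.Adj] : ℕ :=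
  sSup {m | ∃ W : Finset V, G.IsSmallSet W ∧ W.card = m}

/-- `α(G)`: the independence number of `G`. -/
noncomputable def SimpleGraph.indepNum' {V : Type*} [Fintype V] (G : SimpleGraph V) : ℕ :=
  sSup {m | ∃ W : Finset V, (∀ v ∈ W, ∀ w ∈ W, ¬ G.Adj v w) ∧ W.card = m}

/-! By Young's inequality `(k+1) d^k M ≤ k d^(k+1) + M^(k+1)`, an average bound on the
`(k+1)`-st powers of the degrees implies the same bound on the `k`-th powers, so every δ_{k+1}-small
set is δ_k-small; every small set is δ_k-small termwise. Hence partitions into sets of the stronger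
kind are partitions of the weaker kind.

For `φ(G) ≤ ω(G)`, take a vertex `v` of maximum degree. Its non-neighbours form a small set: each has
degree at most `d(v)`, and there are at most `n - d(v)` of them. Its neighbourhood has clique number
at most `ω(G) - 1`, so we recurse on it. -/

theorem succ_mul_pow_mul_le_mul_pow_add_pow {R : Type*} [CommRing R] [LinearOrder R]
    [IsStrictOrderedRing R] (k : ℕ) {a b : R} (ha : 0 ≤ a) (hb : 0 ≤ b) :
    (k + 1) * a ^ k * b ≤ k * a ^ (k + 1) + b ^ (k + 1) := by
  induction k with
  | zero => simp
  | succ k ih =>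
    have hb' := mul_le_mul_of_nonneg_right ih hb
    have hsq := mul_le_mul_of_nonneg_left (two_mul_le_add_sq a b)
      (mul_nonneg (by positivity : (0 : R) ≤ k + 1) (pow_nonneg ha k))
    push_cast
    linear_combination hb' + hsq

theorem Finset.sum_pow_le_card_mul_pow_of_sum_pow_succ_le {R ι : Type*} [CommRing R]
    [LinearOrder R] [IsStrictOrderedRing R] {s : Finset ι} {f : ι → R} {M : R} (k : ℕ)
    (hf : ∀ i ∈ s, 0 ≤ f i) (hM : 0 ≤ M) (h : ∑ i ∈ s, f i ^ (k + 1) ≤ #s * M ^ (k + 1)) :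
    ∑ i ∈ s, f i ^ k ≤ #s * M ^ k := by
  obtain rfl | hM := hM.eq_or_lt
  · have hzero : ∀ i ∈ s, f i = 0 := fun i hi => pow_eq_zero_iff (Nat.succ_ne_zero k) |>.1 <|
      (sum_eq_zero_iff_of_nonneg fun j hj => pow_nonneg (hf j hj) _).1
        (le_antisymm (by simpa using h) (sum_nonneg fun j hj => pow_nonneg (hf j hj) _)) i hi
    rw [sum_congr rfl fun i hi => by rw [hzero i hi], sum_const, nsmul_eq_mul]
  · have hscaled : (k + 1) * M * ∑ i ∈ s, f i ^ k ≤ (k + 1) * M * (#s * M ^ k) :=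
      calc (k + 1) * M * ∑ i ∈ s, f i ^ k = ∑ i ∈ s, (k + 1) * f i ^ k * M := by
            rw [mul_sum]; exact sum_congr rfl fun i _ => by ring
        _ ≤ ∑ i ∈ s, (k * f i ^ (k + 1) + M ^ (k + 1)) :=
            sum_le_sum fun i hi => succ_mul_pow_mul_le_mul_pow_add_pow k (hf i hi) hM.le
        _ = k * ∑ i ∈ s, f i ^ (k + 1) + #s * M ^ (k + 1) := by
            rw [sum_add_distrib, mul_sum, sum_const, nsmul_eq_mul]
        _ ≤ k * (#s * M ^ (k + 1)) + #s * M ^ (k + 1) := by gcongr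
        _ = (k + 1) * M * (#s * M ^ k) := by ring
    exact le_of_mul_le_mul_left hscaled (by positivity)

section Partition

variable {V : Type*} [Fintype V]

/-- This is `0` when no partition into parts satisfying `P` exists (`sInf ∅ = 0`). -/
noncomputable def partitionNumber (P : Finset V → Prop) : ℕ :=
  sInf {r | ∃ f : V → Fin r, ∀ i, P (univ.filter fun v => f v = i)}

theorem partitionNumber_le {P : Finset V → Prop} {r : ℕ} (f : V → Fin r)
    (hf : ∀ i, P (univ.filter fun v => f v = i)) : partitionNumber P ≤ r :=
  Nat.sInf_le ⟨f, hf⟩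

theorem partitionNumber_mono {P Q : Finset V → Prop} (hPQ : ∀ W, P W → Q W)
    (hP : ∃ r, ∃ f : V → Fin r, ∀ i, P (univ.filter fun v => f v = i)) :
    partitionNumber Q ≤ partitionNumber P := by
  obtain ⟨f, hf⟩ := Nat.sInf_mem hP
  exact partitionNumber_le f fun i => hPQ _ (hf i)

end Partition

namespace SimpleGraph

variable {V : Type*} [Fintype V] {G : SimpleGraph V} [DecidableRel G.Adj]

theorem phi_eq_partitionNumber : G.phi = partitionNumber G.IsSmallSet := rfl

theorem phiDelta_eq_partitionNumber (k : ℕ) :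
    G.phiDelta k = partitionNumber (G.IsDeltaSmallSet k) := rfl

theorem IsSmallSet.isDeltaSmallSet {W : Finset V} (h : G.IsSmallSet W) (k : ℕ) :
    G.IsDeltaSmallSet k W :=
  calc ∑ v ∈ W, G.degree v ^ k ≤ ∑ _v ∈ W, (Fintype.card V - #W) ^ k :=
        sum_le_sum fun v hv => Nat.pow_le_pow_left (h v hv) k
    _ = #W * (Fintype.card V - #W) ^ k := by rw [sum_const, smul_eq_mul]

theorem IsDeltaSmallSet.of_succ {k : ℕ} {W : Finset V} (h : G.IsDeltaSmallSet (k + 1) W) :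
    G.IsDeltaSmallSet k W := by
  have := sum_pow_le_card_mul_pow_of_sum_pow_succ_le (R := ℤ) (f := fun v => (G.degree v : ℤ))
    (M := ((Fintype.card V - #W : ℕ) : ℤ)) k (fun _ _ => by positivity) (by positivity)
    (by exact_mod_cast h)
  exact_mod_cast this

theorem isSmallSet_of_disjoint_neighborFinset {v : V} {W : Finset V}
    (hW : Disjoint W (G.neighborFinset v)) (hdeg : ∀ u ∈ W, G.degree u ≤ G.degree v) :
    G.IsSmallSet W := by
  classical
  have hcard : #W + G.degree v ≤ Fintype.card V := by
    rw [← card_neighborFinset_eq_degree, ← card_union_of_disjoint hW]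
    exact card_le_univ _
  intro u hu
  have := hdeg u hu
  omega

theorem exists_isSmallSet_labelling (m : ℕ) (S : Finset V)
    (hS : ∀ t ⊆ S, G.IsClique (t : Set V) → #t ≤ m) :
    ∃ g : V → ℕ, (∀ v ∈ S, g v < m) ∧ ∀ i, G.IsSmallSet (S.filter fun v => g v = i) := by
  classical
  induction m generalizing S with
  | zero =>
    obtain rfl : S = ∅ := eq_empty_of_forall_notMem fun v hv => by
      simpa using hS {v} (by simpa) (by simp)
    exact ⟨0, by simp, fun i => by simp [IsSmallSet]⟩
  | succ m ih =>
    obtain rfl | hne := S.eq_empty_or_nonempty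
    · exact ⟨0, by simp, fun i => by simp [IsSmallSet]⟩
    obtain ⟨v, hv, hmax⟩ := S.exists_max_image (fun u => G.degree u) hne
    have hT : ∀ t ⊆ S.filter (G.Adj v), G.IsClique (t : Set V) → #t ≤ m := by
      intro t ht hc
      have hadj : ∀ u ∈ t, G.Adj v u := fun u hu => (mem_filter.1 (ht hu)).2
      have hvt : v ∉ t := fun h => G.irrefl (hadj v h)
      have := hS (insert v t) (insert_subset hv (ht.trans (filter_subset _ _)))
        (by rw [coe_insert]; exact hc.insert fun u hu _ => hadj u hu)
      rw [card_insert_of_notMem hvt] at this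
      omega
    obtain ⟨g, hgm, hg⟩ := ih _ hT
    refine ⟨fun u => if G.Adj v u then g u else m, fun u hu => ?_, fun i => ?_⟩
    · dsimp only
      split_ifs with hvu
      exacts [(hgm u (mem_filter.2 ⟨hu, hvu⟩)).trans m.lt_succ_self, m.lt_succ_self]
    by_cases him : i = m
    · subst him
      have hfilter : (S.filter fun u => (if G.Adj v u then g u else i) = i)
          = S.filter fun u => ¬ G.Adj v u := by
        ext u
        grind
      rw [hfilter]
      refine isSmallSet_of_disjoint_neighborFinset (v := v) ?_ fun u hu => hmax u (mem_filter.1 hu).1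
      exact Finset.disjoint_left.2 fun u hu => by simpa using (mem_filter.1 hu).2
    · have hfilter : (S.filter fun u => (if G.Adj v u then g u else m) = i)
          = (S.filter (G.Adj v)).filter fun u => g u = i := by
        ext u
        grind
      rw [hfilter]
      exact hg i

theorem exists_isSmallSet_partition_cliqueNum :
    ∃ f : V → Fin G.cliqueNum, ∀ i, G.IsSmallSet (univ.filter fun v => f v = i) := by
  obtain ⟨g, hgm, hg⟩ := exists_isSmallSet_labelling (G := G) G.cliqueNum univ
    fun t _ ht => ht.card_le_cliqueNum
  refine ⟨fun v => ⟨g v, hgm v (mem_univ v)⟩, fun i => ?_⟩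
  convert hg i using 2
  simp [Fin.ext_iff]

end SimpleGraph

open SimpleGraph

theorem stmt_3_general {V : Type*} [Fintype V] (G : SimpleGraph V) [DecidableRel G.Adj]
    (k : ℕ) :
    G.phiDelta k ≤ G.phiDelta (k + 1) ∧ G.phiDelta k ≤ G.phi ∧
      G.phi ≤ G.cliqueNum ∧ (G.cliqueNum : ℕ∞) ≤ G.chromaticNumber := by
  obtain ⟨f, hf⟩ := G.exists_isSmallSet_partition_cliqueNum
  rw [phi_eq_partitionNumber, phiDelta_eq_partitionNumber, phiDelta_eq_partitionNumber]
  refine ⟨partitionNumber_mono (fun _ hW => hW.of_succ) ⟨_, f, fun i => (hf i).isDeltaSmallSet _⟩,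
    partitionNumber_mono (fun _ hW => hW.isDeltaSmallSet k) ⟨_, f, hf⟩,
    partitionNumber_le f hf, G.cliqueNum_le_chromaticNumber⟩

theorem stmt_3 {V : Type*} [Fintype V] (G : SimpleGraph V) [DecidableRel G.Adj]
    (k : ℕ) (hk : 1 ≤ k) :
    G.phiDelta k ≤ G.phiDelta (k + 1) ∧ G.phiDelta k ≤ G.phi ∧
      G.phi ≤ G.cliqueNum ∧ (G.cliqueNum : ℕ∞) ≤ G.chromaticNumber :=
  stmt_3_general G k
end

section
/- Let G be a finite simple graph on n ≥ 1 vertices whose vertex set is partitioned into r pairwise disjoint δ_k-small sets V_1, …, V_r, and let k be a natural number with 1 ≤ k ≤ r. Then r ≥ n/(n − D_k(G)). -/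
open Finset

/-- `α(G)`: the independence number of `G`. -/
noncomputable def SimpleGraph.indepNumFile {V : Type*} [Fintype V] (G : SimpleGraph V) : ℕ :=
  sSup {m | ∃ W : Finset V, (∀ v ∈ W, ∀ w ∈ W, ¬ G.Adj v w) ∧ W.card = m}

/-!
Write `x_i = |V_i| / n`, so that `∑ x_i = 1`. Summing the δₖ-smallness of the parts gives
`∑_v d(v)^k ≤ n^(k+1) ∑ x_i (1 - x_i)^k`. Since `k ≤ r`, the function `u ↦ u^k (1 - u)` lies
below its tangent at `u = 1 - 1/r` on `[0, ∞)`; evaluated at `u_i = 1 - x_i`, whose average is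
exactly `1 - 1/r`, the tangent terms cancel and `∑ x_i (1 - x_i)^k ≤ (1 - 1/r)^k`. Hence
`D_k(G) ≤ n (1 - 1/r) = n - n/r`, which rearranges to `r ≥ n / (n - D_k(G))`.
-/

-- `b ^ m * ((m + 1) - (m + 2) * b)` is the derivative of `u ↦ u ^ (m + 1) * (1 - u)` at `b`.
theorem pow_succ_mul_one_sub_le_tangent {b u : ℝ} (hu : 0 ≤ u) (m : ℕ)
    (hb : (m : ℝ) ≤ (m + 1) * b) :
    u ^ (m + 1) * (1 - u) ≤ b ^ (m + 1) * (1 - b) + b ^ m * ((m + 1) - (m + 2) * b) * (u - b) := by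
  induction m with
  | zero =>
    push_cast
    nlinarith [sq_nonneg (u - b)]
  | succ m ih =>
    push_cast at hb ⊢
    have hb0 : 0 ≤ b := by nlinarith
    have ih := mul_le_mul_of_nonneg_left (ih (by nlinarith)) hu
    have hcurv : 0 ≤ b ^ m * (((m + 2) * b - (m + 1)) * (u - b) ^ 2) := by
      have : (0 : ℝ) ≤ (m + 2) * b - (m + 1) := by nlinarith
      positivity
    calc u ^ (m + 1 + 1) * (1 - u) = u * (u ^ (m + 1) * (1 - u)) := by ring
      _ ≤ u * (b ^ (m + 1) * (1 - b) + b ^ m * ((m + 1) - (m + 2) * b) * (u - b)) := ih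
      _ = b ^ (m + 1 + 1) * (1 - b) + b ^ (m + 1) * ((m + 1 + 1) - (m + 1 + 2) * b) * (u - b)
          - b ^ m * (((m + 2) * b - (m + 1)) * (u - b) ^ 2) := by ring
      _ ≤ _ := sub_le_self _ hcurv

theorem sum_mul_one_sub_pow_le {ι : Type*} (s : Finset ι) (x : ι → ℝ) (hx : ∀ i ∈ s, x i ≤ 1)
    (hsum : ∑ i ∈ s, x i = 1) {k : ℕ} (hk : k ≤ s.card) :
    ∑ i ∈ s, x i * (1 - x i) ^ k ≤ (1 - 1 / s.card) ^ k := by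
  rcases k with _ | m
  · simp [hsum]
  set r : ℝ := (s.card : ℝ)
  have hr : 0 < r := by simp only [r]; exact_mod_cast (Nat.succ_pos m).trans_le hk
  have hmr : (m : ℝ) + 1 ≤ r := by simp only [r]; exact_mod_cast hk
  set b := 1 - 1 / r
  have hb : (m : ℝ) ≤ (m + 1) * b := by
    have : ((m : ℝ) + 1) / r ≤ 1 := (div_le_one hr).2 hmr
    simp only [b]
    linarith [show ((m : ℝ) + 1) * (1 - 1 / r) = m + 1 - (m + 1) / r by ring]
  set c := b ^ m * ((m + 1) - (m + 2) * b)
  calc ∑ i ∈ s, x i * (1 - x i) ^ (m + 1)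
      = ∑ i ∈ s, (1 - x i) ^ (m + 1) * (1 - (1 - x i)) := by
        refine sum_congr rfl fun i _ => ?_
        ring
    _ ≤ ∑ i ∈ s, (b ^ (m + 1) * (1 - b) + c * ((1 - x i) - b)) :=
        sum_le_sum fun i hi =>
          pow_succ_mul_one_sub_le_tangent (sub_nonneg.2 (hx i hi)) m hb
    _ = r * b ^ (m + 1) * (1 - b) + c * (r * (1 - b) - ∑ i ∈ s, x i) := by
        simp only [sum_add_distrib, ← mul_sum, sum_sub_distrib,
          sum_const, nsmul_eq_mul, r]
        ring
    _ = b ^ (m + 1) := by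
        rw [hsum]
        simp only [b]
        field_simp
        ring

namespace SimpleGraph

variable {V : Type*} [Fintype V] (G : SimpleGraph V) [DecidableRel G.Adj]

theorem IsDeltaSmallSet.sum_degree_pow_le {k : ℕ} {W : Finset V} (hW : G.IsDeltaSmallSet k W) :
    ∑ v ∈ W, (G.degree v : ℝ) ^ k ≤ W.card * ((Fintype.card V : ℝ) - W.card) ^ k := by
  have h := (Nat.cast_le (α := ℝ)).2 hW
  push_cast [Nat.cast_sub W.card_le_univ] at h
  exact h

theorem sum_degree_pow_le_of_isPartition {ι : Type*} [Fintype ι] {k : ℕ}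
    (hk : k ≤ Fintype.card ι) (P : ι → Finset V) (hdisj : Pairwise (Function.onFun Disjoint P))
    (hcover : ∀ v, ∃ i, v ∈ P i) (hsmall : ∀ i, G.IsDeltaSmallSet k (P i)) :
    ∑ v, (G.degree v : ℝ) ^ k ≤
      Fintype.card V * (Fintype.card V - Fintype.card V / Fintype.card ι : ℝ) ^ k := by
  classical
  set n : ℝ := (Fintype.card V : ℝ)
  rcases (Fintype.card V).eq_zero_or_pos with hV | hV
  · simp [n, hV, Finset.univ_eq_empty_iff.2 (Fintype.card_eq_zero_iff.1 hV)]
  have hn : 0 < n := by simp only [n]; exact_mod_cast hV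
  have hunion : Finset.univ.biUnion P = Finset.univ :=
    Finset.eq_univ_of_forall fun v => Finset.mem_biUnion.2 <| by simpa using hcover v
  have hpd : ((Finset.univ : Finset ι) : Set ι).PairwiseDisjoint P := hdisj.set_pairwise _
  have hcard : ∑ i, ((P i).card : ℝ) = n := by
    simp only [n]
    exact_mod_cast (card_biUnion hpd).symm.trans (by rw [hunion, card_univ])
  have hrescale : ∀ c : ℝ, c * (n - c) ^ k = n ^ (k + 1) * (c / n * (1 - c / n) ^ k) := by
    intro c
    rw [one_sub_div hn.ne', div_pow]
    field_simp
    ring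
  calc ∑ v, (G.degree v : ℝ) ^ k
      = ∑ i, ∑ v ∈ P i, (G.degree v : ℝ) ^ k := by rw [← sum_biUnion hpd, hunion]
    _ ≤ ∑ i, ((P i).card : ℝ) * (n - (P i).card) ^ k :=
        sum_le_sum fun i _ => (hsmall i).sum_degree_pow_le
    _ = n ^ (k + 1) * ∑ i, ((P i).card / n) * (1 - (P i).card / n) ^ k := by
        simp only [hrescale, mul_sum]
    _ ≤ n ^ (k + 1) * (1 - 1 / Fintype.card ι) ^ k := by
        gcongr
        refine sum_mul_one_sub_pow_le _ _ (fun i _ => ?_) ?_ hk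
        · exact (div_le_one hn).2 (by simp only [n]; exact_mod_cast (P i).card_le_univ)
        · rw [← sum_div, hcard, div_self hn.ne']
    _ = n * (n - n / Fintype.card ι) ^ k := by
        rw [← mul_one_div n, ← mul_one_sub, mul_pow, pow_succ]
        ring

theorem degPowerMean_le_of_sum_pow_le {k : ℕ} (hk : k ≠ 0) {a : ℝ} (ha : 0 ≤ a)
    (h : ∑ v, (G.degree v : ℝ) ^ k ≤ Fintype.card V * a ^ k) : G.degPowerMean k ≤ a := by
  have hmean : (∑ v, (G.degree v : ℝ) ^ k) / Fintype.card V ≤ a ^ k :=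
    div_le_of_le_mul₀ (Nat.cast_nonneg _) (by positivity) (by linarith)
  calc G.degPowerMean k ≤ (a ^ k) ^ ((k : ℝ)⁻¹) := by
        rw [degPowerMean, one_div]
        exact Real.rpow_le_rpow (by positivity) hmean (by positivity)
    _ = a := Real.pow_rpow_inv_natCast ha hk

end SimpleGraph

theorem stmt_9 {V : Type*} [Fintype V] (G : SimpleGraph V) [DecidableRel G.Adj]
    (hn : 1 ≤ Fintype.card V) (k r : ℕ) (hk : 1 ≤ k) (hkr : k ≤ r)
    (P : Fin r → Finset V)
    (hdisj : ∀ i j, i ≠ j → Disjoint (P i) (P j))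
    (hcover : ∀ v : V, ∃ i, v ∈ P i)
    (hsmall : ∀ i, G.IsDeltaSmallSet k (P i)) :
    (r : ℝ) ≥ (Fintype.card V : ℝ) / ((Fintype.card V : ℝ) - G.degPowerMean k) := by
  set n : ℝ := (Fintype.card V : ℝ)
  have hn : 0 < n := by simp only [n]; exact_mod_cast hn
  have hr : (1 : ℝ) ≤ r := by exact_mod_cast hk.trans hkr
  have hsum := G.sum_degree_pow_le_of_isPartition (by simpa using hkr) P
    (fun i j => hdisj i j) hcover hsmall
  rw [Fintype.card_fin] at hsum
  have hD : G.degPowerMean k ≤ n - n / r :=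
    G.degPowerMean_le_of_sum_pow_le (by omega)
      (sub_nonneg.2 (div_le_self hn.le hr)) hsum
  have hgap : 0 < n / r := div_pos hn (by linarith)
  rw [ge_iff_le, div_le_iff₀ (by linarith)]
  calc n = r * (n / r) := by field_simp
    _ ≤ r * (n - G.degPowerMean k) := by gcongr; linarith
end

section
/- Let G be a finite simple graph on n ≥ 1 vertices with φ^(4)(G) ≠ 2. Then for every natural number s ≥ 4, φ^(s)(G) ≥ n/(n − D_4(G)). -/
open Finset

/-- `α(G)`: the independence number of `G`. -/
noncomputable def SimpleGraph.indepNumSSup {V : Type*} [Fintype V] (G : SimpleGraph V) : ℕ :=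
  sSup {m | ∃ W : Finset V, (∀ v ∈ W, ∀ w ∈ W, ¬ G.Adj v w) ∧ W.card = m}


/-!
A partition of `V(G)` into `r` δ₄-small parts of sizes `x₁, …, x_r` gives
`∑ d(v)⁴ ≤ ∑ xᵢ (n - xᵢ)⁴`. For `r ≥ 3` the right-hand side is largest for the balanced partition,
where it equals `n (n - n / r)⁴`; hence `D₄(G) ≤ n - n / r`, i.e. `r ≥ n / (n - D₄(G))`. For `r ≥ 4`
this is the tangent line of `t ↦ t (1 - t)⁴` at `1 / r`, `r = 3` takes a short case analysis, and
for `r = 2` it is false. By the power mean inequality δₛ-small sets are δ₄-small when `s ≥ 4`, so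
`φ⁽ˢ⁾(G) ≥ φ⁽⁴⁾(G)`, which is at least `2`, hence at least `3`, unless `G` is edgeless, where the
bound is `φ⁽ˢ⁾(G) ≥ 1`.
-/

theorem Finset.sum_pow_le_card_mul_pow_of_le {ι : Type*} {W : Finset ι} {x : ι → ℝ}
    (hx : ∀ i ∈ W, 0 ≤ x i) {c : ℝ} (hc : 0 ≤ c) {k s : ℕ} (hks : k ≤ s)
    (h : ∑ i ∈ W, x i ^ s ≤ #W * c ^ s) : ∑ i ∈ W, x i ^ k ≤ #W * c ^ k := by
  rcases Nat.eq_zero_or_pos k with rfl | hk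
  · simp
  rcases W.eq_empty_or_nonempty with rfl | hW
  · simp
  have hW0 : (0 : ℝ) < #W := by exact_mod_cast hW.card_pos
  have hp : (1 : ℝ) ≤ s / k := by
    rw [one_le_div₀ (by exact_mod_cast hk)]
    exact_mod_cast hks
  have hpow : ∀ y : ℝ, 0 ≤ y → (y ^ k) ^ ((s : ℝ) / k) = y ^ s := fun y hy => by
    rw [← Real.rpow_natCast y k, ← Real.rpow_mul hy, mul_div_cancel₀ _ (by positivity),
      Real.rpow_natCast]
  have hjensen := Real.rpow_arith_mean_le_arith_mean_rpow W (fun _ => (#W : ℝ)⁻¹)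
    (fun i => x i ^ k) (fun _ _ => by positivity) (by simp [hW0.ne'])
    (fun i hi => pow_nonneg (hx i hi) k) hp
  simp only [← mul_sum] at hjensen
  rw [sum_congr rfl fun i hi => hpow _ (hx i hi)] at hjensen
  have hmean : ((#W : ℝ)⁻¹ * ∑ i ∈ W, x i ^ k) ^ ((s : ℝ) / k) ≤ (c ^ k) ^ ((s : ℝ) / k) := by
    rw [hpow c hc]
    exact hjensen.trans ((inv_mul_le_iff₀ hW0).2 h)
  have hsum : 0 ≤ ∑ i ∈ W, x i ^ k := sum_nonneg fun i hi => pow_nonneg (hx i hi) k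
  rwa [Real.rpow_le_rpow_iff (by positivity) (by positivity) (by positivity),
    inv_mul_le_iff₀ hW0] at hmean

theorem mul_one_sub_pow_four_le_tangent {t c : ℝ} (ht : t ≤ 1) (hc : c ≤ 1 / 4) :
    t * (1 - t) ^ 4 ≤ c * (1 - c) ^ 4 + (1 - c) ^ 3 * (1 - 5 * c) * (t - c) := by
  have hq : 0 ≤ (1 - c) ^ 2 * (1 - 4 * c) + (1 - t) * ((1 - c) * (1 - 3 * c))
      + (1 - t) ^ 2 * (1 - 2 * c) + (1 - t) ^ 3 := by
    have h1 := mul_nonneg (sq_nonneg (1 - c)) (by linarith : (0 : ℝ) ≤ 1 - 4 * c)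
    have h2 := mul_nonneg (by linarith : (0 : ℝ) ≤ 1 - t)
      (mul_nonneg (by linarith : (0 : ℝ) ≤ 1 - c) (by linarith : (0 : ℝ) ≤ 1 - 3 * c))
    have h3 := mul_nonneg (sq_nonneg (1 - t)) (by linarith : (0 : ℝ) ≤ 1 - 2 * c)
    have h4 := pow_nonneg (by linarith : (0 : ℝ) ≤ 1 - t) 3
    linarith
  have key : c * (1 - c) ^ 4 + (1 - c) ^ 3 * (1 - 5 * c) * (t - c) - t * (1 - t) ^ 4
      = (t - c) ^ 2 * ((1 - c) ^ 2 * (1 - 4 * c) + (1 - t) * ((1 - c) * (1 - 3 * c))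
        + (1 - t) ^ 2 * (1 - 2 * c) + (1 - t) ^ 3) := by
    ring
  exact sub_nonneg.1 (key ▸ mul_nonneg (sq_nonneg _) hq)

theorem mul_one_sub_pow_four_le {t : ℝ} (ht : t ≤ 1) : t * (1 - t) ^ 4 ≤ 256 / 3125 := by
  have := mul_one_sub_pow_four_le_tangent ht (by norm_num : (1 / 5 : ℝ) ≤ 1 / 4)
  norm_num at this
  linarith

theorem mul_one_sub_pow_four_le_of_half_le {t : ℝ} (ht₀ : 1 / 2 ≤ t) (ht₁ : t ≤ 1) :
    t * (1 - t) ^ 4 ≤ 1 / 32 := by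
  have hu0 : 0 ≤ 1 - t := by linarith
  have htu : t * (1 - t) ≤ 1 / 4 := by nlinarith [sq_nonneg (1 - 2 * t)]
  have hu3 : (1 - t) ^ 3 ≤ 1 / 8 := by
    calc (1 - t) ^ 3 ≤ (1 / 2) ^ 3 := pow_le_pow_left₀ hu0 (by linarith) 3
      _ = 1 / 8 := by norm_num
  calc t * (1 - t) ^ 4 = (t * (1 - t)) * (1 - t) ^ 3 := by ring
    _ ≤ (1 / 4) * (1 / 8) := mul_le_mul htu hu3 (pow_nonneg hu0 3) (by norm_num)
    _ = 1 / 32 := by norm_num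

theorem mul_one_sub_pow_four_le_of_le_half {t : ℝ} (ht : t ≤ 1 / 2) :
    t * (1 - t) ^ 4 ≤ 32 / 243 - 16 / 81 * t := by
  have hq : 0 ≤ -(4 / 27) + (1 - t) ^ 2 * (1 / 3) + (1 - t) ^ 3 := by
    have h2 : (1 / 2) ^ 2 ≤ (1 - t) ^ 2 := pow_le_pow_left₀ (by norm_num) (by linarith) 2
    have h3 : (1 / 2) ^ 3 ≤ (1 - t) ^ 3 := pow_le_pow_left₀ (by norm_num) (by linarith) 3
    linarith
  have key : 32 / 243 - 16 / 81 * t - t * (1 - t) ^ 4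
      = (t - 1 / 3) ^ 2 * (-(4 / 27) + (1 - t) ^ 2 * (1 / 3) + (1 - t) ^ 3) := by
    ring
  exact sub_nonneg.1 (key ▸ mul_nonneg (sq_nonneg _) hq)

theorem sum_three_mul_one_sub_pow_four_le {a b c : ℝ} (ha : 0 ≤ a) (hb : 0 ≤ b) (hc : 0 ≤ c)
    (h : a + b + c = 1) : a * (1 - a) ^ 4 + b * (1 - b) ^ 4 + c * (1 - c) ^ 4 ≤ 16 / 81 := by
  have ga := mul_one_sub_pow_four_le (show a ≤ 1 by linarith)
  have gb := mul_one_sub_pow_four_le (show b ≤ 1 by linarith)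
  have gc := mul_one_sub_pow_four_le (show c ≤ 1 by linarith)
  by_cases ha' : 1 / 2 ≤ a
  · linarith [mul_one_sub_pow_four_le_of_half_le ha' (show a ≤ 1 by linarith)]
  by_cases hb' : 1 / 2 ≤ b
  · linarith [mul_one_sub_pow_four_le_of_half_le hb' (show b ≤ 1 by linarith)]
  by_cases hc' : 1 / 2 ≤ c
  · linarith [mul_one_sub_pow_four_le_of_half_le hc' (show c ≤ 1 by linarith)]
  linarith [mul_one_sub_pow_four_le_of_le_half (show a ≤ 1 / 2 by linarith),
    mul_one_sub_pow_four_le_of_le_half (show b ≤ 1 / 2 by linarith),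
    mul_one_sub_pow_four_le_of_le_half (show c ≤ 1 / 2 by linarith)]

theorem sum_mul_one_sub_pow_four_le {r : ℕ} (hr : 3 ≤ r) (t : Fin r → ℝ) (h0 : ∀ i, 0 ≤ t i)
    (h1 : ∑ i, t i = 1) : ∑ i, t i * (1 - t i) ^ 4 ≤ (1 - 1 / (r : ℝ)) ^ 4 := by
  rcases hr.eq_or_lt with rfl | hr4
  · rw [Fin.sum_univ_three] at h1 ⊢
    norm_num
    linarith [sum_three_mul_one_sub_pow_four_le (h0 0) (h0 1) (h0 2) h1]
  have hr0 : (0 : ℝ) < r := by positivity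
  have hc4 : 1 / (r : ℝ) ≤ 1 / 4 :=
    one_div_le_one_div_of_le (by norm_num) (by exact_mod_cast hr4)
  have ht1 : ∀ i, t i ≤ 1 := fun i => h1 ▸ single_le_sum (fun j _ => h0 j) (mem_univ i)
  have hsum : ∑ i, (t i - 1 / r) = 0 := by
    rw [sum_sub_distrib, h1, sum_const, card_univ, Fintype.card_fin, nsmul_eq_mul,
      mul_one_div_cancel hr0.ne', sub_self]
  calc ∑ i, t i * (1 - t i) ^ 4
      ≤ ∑ i, (1 / r * (1 - 1 / r) ^ 4 + (1 - 1 / r) ^ 3 * (1 - 5 * (1 / r)) * (t i - 1 / r)) :=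
        sum_le_sum fun i _ => mul_one_sub_pow_four_le_tangent (ht1 i) hc4
    _ = r * (1 / r * (1 - 1 / r) ^ 4) := by
        rw [sum_add_distrib, ← mul_sum univ _ ((1 - 1 / (r : ℝ)) ^ 3 * (1 - 5 * (1 / r))), hsum,
          mul_zero, add_zero, sum_const, card_univ, Fintype.card_fin, nsmul_eq_mul]
    _ = (1 - 1 / r) ^ 4 := by field_simp

theorem sum_mul_sub_pow_four_le {r : ℕ} (hr : 3 ≤ r) {n : ℝ} (x : Fin r → ℝ)
    (hx0 : ∀ i, 0 ≤ x i) (hx : ∑ i, x i = n) : ∑ i, x i * (n - x i) ^ 4 ≤ n * (n - n / r) ^ 4 := by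
  rcases (hx ▸ sum_nonneg fun i _ => hx0 i : 0 ≤ n).eq_or_lt with rfl | hn
  · have hzero := (sum_eq_zero_iff_of_nonneg fun i _ => hx0 i).1 hx
    simp [hzero]
  have ht := sum_mul_one_sub_pow_four_le hr (fun i => x i / n) (fun i => div_nonneg (hx0 i) hn.le)
    (by rw [← sum_div, hx, div_self hn.ne'])
  calc ∑ i, x i * (n - x i) ^ 4 = n ^ 5 * ∑ i, x i / n * (1 - x i / n) ^ 4 := by
        rw [mul_sum]
        refine sum_congr rfl fun i _ => ?_
        field_simp
    _ ≤ n ^ 5 * (1 - 1 / r) ^ 4 := mul_le_mul_of_nonneg_left ht (by positivity)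
    _ = n * (n - n / r) ^ 4 := by ring

theorem div_sub_le_of_le_sub_div {n d r : ℝ} (hn : 0 < n) (hr : 0 < r) (h : d ≤ n - n / r) :
    n / (n - d) ≤ r := by
  have hnr : 0 < n / r := by positivity
  rw [div_le_iff₀ (by linarith)]
  calc n = r * (n / r) := by field_simp
    _ ≤ r * (n - d) := by gcongr; linarith

namespace SimpleGraph

variable {V : Type*} [Fintype V] (G : SimpleGraph V) [DecidableRel G.Adj]

theorem isDeltaSmallSet_iff_real {k : ℕ} {W : Finset V} :
    G.IsDeltaSmallSet k W ↔
      ∑ v ∈ W, (G.degree v : ℝ) ^ k ≤ #W * ((Fintype.card V : ℝ) - #W) ^ k := by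
  rw [IsDeltaSmallSet, ← Nat.cast_le (α := ℝ)]
  push_cast [Nat.cast_sub W.card_le_univ]
  rfl

variable {G} in
theorem IsDeltaSmallSet.of_le {k s : ℕ} {W : Finset V} (hks : k ≤ s)
    (h : G.IsDeltaSmallSet s W) : G.IsDeltaSmallSet k W := by
  rw [isDeltaSmallSet_iff_real] at h ⊢
  exact sum_pow_le_card_mul_pow_of_le (fun v _ => Nat.cast_nonneg _)
    (sub_nonneg.2 (by exact_mod_cast W.card_le_univ)) hks h

theorem isDeltaSmallSet_singleton (k : ℕ) (v : V) : G.IsDeltaSmallSet k {v} := by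
  rw [IsDeltaSmallSet, sum_singleton, card_singleton, one_mul]
  exact Nat.pow_le_pow_left (Nat.le_sub_one_of_lt (G.degree_lt_card_verts v)) k

theorem degree_eq_zero_of_isDeltaSmallSet_univ {k : ℕ} (hk : k ≠ 0)
    (h : G.IsDeltaSmallSet k univ) (v : V) : G.degree v = 0 := by
  rw [IsDeltaSmallSet, card_univ, Nat.sub_self, zero_pow hk, mul_zero, Nat.le_zero,
    sum_eq_zero_iff] at h
  exact pow_eq_zero_iff hk |>.1 (h v (mem_univ v))

theorem exists_phiDelta_partition (k : ℕ) :
    ∃ f : V → Fin (G.phiDelta k), ∀ i, G.IsDeltaSmallSet k (univ.filter fun v => f v = i) := by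
  refine Nat.sInf_mem
    (s := {r | ∃ f : V → Fin r, ∀ i, G.IsDeltaSmallSet k (univ.filter fun v => f v = i)})
    ⟨Fintype.card V, Fintype.equivFin V, fun i => ?_⟩
  have hpart :
      (univ.filter fun v => Fintype.equivFin V v = i) = {(Fintype.equivFin V).symm i} := by
    ext v
    simp [Equiv.eq_symm_apply]
  rw [hpart]
  exact G.isDeltaSmallSet_singleton k _

theorem one_le_phiDelta [Nonempty V] (k : ℕ) : 1 ≤ G.phiDelta k :=
  (G.exists_phiDelta_partition k).elim fun f _ => (f (Classical.arbitrary V)).pos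

theorem phiDelta_le_of_le {k s : ℕ} (hks : k ≤ s) : G.phiDelta k ≤ G.phiDelta s :=
  (G.exists_phiDelta_partition s).elim fun f hf => Nat.sInf_le ⟨f, fun i => (hf i).of_le hks⟩

theorem degree_eq_zero_of_phiDelta_le_one {k : ℕ} (hk : k ≠ 0) (h : G.phiDelta k ≤ 1) (v : V) :
    G.degree v = 0 := by
  obtain ⟨f, hf⟩ := G.exists_phiDelta_partition k
  have : Subsingleton (Fin (G.phiDelta k)) := Fin.subsingleton_iff_le_one.2 h
  have hpart : (univ.filter fun w => f w = f v) = univ :=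
    filter_true_of_mem fun w _ => Subsingleton.elim _ _
  exact G.degree_eq_zero_of_isDeltaSmallSet_univ hk (hpart ▸ hf (f v)) v

theorem degPowerMean_le {k : ℕ} (hk : k ≠ 0) {b : ℝ} (hb : 0 ≤ b)
    (h : ∑ v, (G.degree v : ℝ) ^ k ≤ Fintype.card V * b ^ k) : G.degPowerMean k ≤ b := by
  rw [degPowerMean]
  calc ((∑ v, (G.degree v : ℝ) ^ k) / Fintype.card V) ^ ((1 : ℝ) / k)
      ≤ (b ^ k) ^ ((1 : ℝ) / k) :=
        Real.rpow_le_rpow (by positivity)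
          (div_le_of_le_mul₀ (by positivity) (by positivity) (by linarith)) (by positivity)
    _ = b := by rw [one_div, Real.pow_rpow_inv_natCast hb hk]

theorem sum_degree_pow_le_of_partition {ι : Type*} [Fintype ι] [DecidableEq ι] {k : ℕ}
    (f : V → ι) (hf : ∀ i, G.IsDeltaSmallSet k (univ.filter fun v => f v = i)) :
    ∑ v, (G.degree v : ℝ) ^ k ≤
      ∑ i, (#(univ.filter fun v => f v = i) : ℝ) *
        ((Fintype.card V : ℝ) - #(univ.filter fun v => f v = i)) ^ k := by
  rw [← sum_fiberwise univ f]
  exact sum_le_sum fun i _ => G.isDeltaSmallSet_iff_real.1 (hf i)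

theorem degPowerMean_four_le_of_partition {r : ℕ} (hr : 3 ≤ r) (f : V → Fin r)
    (hf : ∀ i, G.IsDeltaSmallSet 4 (univ.filter fun v => f v = i)) :
    G.degPowerMean 4 ≤ Fintype.card V - Fintype.card V / r := by
  have hcard : ∑ i, (#(univ.filter fun v => f v = i) : ℝ) = Fintype.card V := by
    exact_mod_cast (card_eq_sum_card_fiberwise fun v _ => mem_univ (f v)).symm
  have hr1 : (1 : ℝ) ≤ r := by exact_mod_cast (by omega : 1 ≤ r)
  refine G.degPowerMean_le four_ne_zero (sub_nonneg.2 (div_le_self (Nat.cast_nonneg _) hr1)) ?_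
  exact (G.sum_degree_pow_le_of_partition f hf).trans
    (sum_mul_sub_pow_four_le hr _ (fun i => Nat.cast_nonneg _) hcard)

end SimpleGraph

theorem stmt_14 {V : Type*} [Fintype V] (G : SimpleGraph V) [DecidableRel G.Adj]
    (hn : 1 ≤ Fintype.card V) (h4 : G.phiDelta 4 ≠ 2) (s : ℕ) (hs : 4 ≤ s) :
    (G.phiDelta s : ℝ) ≥
      (Fintype.card V : ℝ) / ((Fintype.card V : ℝ) - G.degPowerMean 4) := by
  have : Nonempty V := Fintype.card_pos_iff.1 hn
  have hr : (1 : ℝ) ≤ G.phiDelta s := by exact_mod_cast G.one_le_phiDelta s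
  refine div_sub_le_of_le_sub_div (by exact_mod_cast hn) (by linarith) ?_
  by_cases hdeg : ∀ v, G.degree v = 0
  · calc G.degPowerMean 4 ≤ 0 := G.degPowerMean_le four_ne_zero le_rfl (by simp [hdeg])
      _ ≤ _ := sub_nonneg.2 (div_le_self (Nat.cast_nonneg _) hr)
  obtain ⟨v, hv⟩ := not_forall.1 hdeg
  have hphi4 : 2 < G.phiDelta 4 := by
    by_contra! h
    exact hv (G.degree_eq_zero_of_phiDelta_le_one four_ne_zero (by omega) v)
  obtain ⟨f, hf⟩ := G.exists_phiDelta_partition s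
  exact G.degPowerMean_four_le_of_partition (hphi4.trans_le (G.phiDelta_le_of_le hs)) f
    fun i => (hf i).of_le hs
end
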